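/- arXiv:1609.07086 — 2 statements merged into one kernel-verified Lean document; each statement's English description precedes it below -/
import Mathlib

section
/- Let A be a real n_1 × n_2 × n_3 tensor with Fourier-domain frontal slices Â^{(i)}, and let 1 ≤ k. For any real tensors X ∈ ℝ^{n_1×k×n_3} and Y ∈ ℝ^{k×n_2×n_3}, let C = X ∗ Y denote the tensor whose Fourier-domain frontal slices satisfy Ĉ^{(i)} = X̂^{(i)} Ŷ^{(i)} for all i. Then ‖A − C‖_F² ≥ (1/n_3) Σ_{i=1}^{n_3} Σ_{j>k} (σ̂_j^{(i)})², where σ̂_j^{(i)} is the j-th largest singular value of Â^{(i)} and the inner sum runs over j = k+1,…,min{n_1,n_2}. -/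
open scoped BigOperators
open Matrix

noncomputable section

/-- The `j`-th largest singular value (1-indexed) of a complex matrix: the square root of the
`j`-th largest eigenvalue of `Aᴴ * A`. -/
def sval {m n : ℕ} (A : Matrix (Fin m) (Fin n) ℂ) (j : ℕ) : ℝ :=
  if h : j - 1 < n then
    Real.sqrt
      (((Matrix.isHermitian_conjTranspose_mul_self A).eigenvalues ∘
          Tuple.sort (Matrix.isHermitian_conjTranspose_mul_self A).eigenvalues)
        (Fin.rev ⟨j - 1, h⟩))
  else 0

/-- The `i`-th Fourier-domain frontal slice of a real third-order tensor. -/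
def fourierSlice {n₁ n₂ n₃ : ℕ} (A : Fin n₁ → Fin n₂ → Fin n₃ → ℝ) (i : Fin n₃) :
    Matrix (Fin n₁) (Fin n₂) ℂ :=
  Matrix.of fun a b => ∑ t : Fin n₃,
    ((A a b t : ℝ) : ℂ) *
      Complex.exp (-2 * (Real.pi : ℂ) * Complex.I * ((i : ℕ) : ℂ) * ((t : ℕ) : ℂ) / ((n₃ : ℕ) : ℂ))

/-- Squared Frobenius norm of a real third-order tensor. -/
def tFrobSq {n₁ n₂ n₃ : ℕ} (A : Fin n₁ → Fin n₂ → Fin n₃ → ℝ) : ℝ :=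
  ∑ a, ∑ b, ∑ t, (A a b t) ^ 2

namespace TsvdAux

/-- Squared Frobenius norm of a complex matrix. -/
def frob {a b : ℕ} (E : Matrix (Fin a) (Fin b) ℂ) : ℝ := ∑ x, ∑ y, Complex.normSq (E x y)

lemma frob_nonneg {a b : ℕ} (E : Matrix (Fin a) (Fin b) ℂ) : 0 ≤ frob E :=
  Finset.sum_nonneg fun _ _ => Finset.sum_nonneg fun _ _ => Complex.normSq_nonneg _

lemma tFrobSq_nonneg {n₁ n₂ n₃ : ℕ} (A : Fin n₁ → Fin n₂ → Fin n₃ → ℝ) : 0 ≤ tFrobSq A :=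
  Finset.sum_nonneg fun _ _ => Finset.sum_nonneg fun _ _ => Finset.sum_nonneg fun _ _ => sq_nonneg _

lemma sum_root {n : ℕ} (t s : Fin n) :
    ∑ i : Fin n,
      Complex.exp (-2 * (Real.pi : ℂ) * Complex.I * ((i : ℕ) : ℂ) * ((t : ℕ) : ℂ) / n) *
        (starRingEnd ℂ) (Complex.exp (-2 * (Real.pi : ℂ) * Complex.I * ((i : ℕ) : ℂ) * ((s : ℕ) : ℂ) / n)) =
      if t = s then (n : ℂ) else 0 := by
  have hn : 0 < n := t.pos
  have hn0 : (n : ℂ) ≠ 0 := Nat.cast_ne_zero.2 hn.ne'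
  set ζ : ℂ := Complex.exp (2 * (Real.pi : ℂ) * Complex.I * (((s : ℕ) : ℂ) - ((t : ℕ) : ℂ)) / n) with hζ
  have key : ∀ i : Fin n,
      Complex.exp (-2 * (Real.pi : ℂ) * Complex.I * ((i : ℕ) : ℂ) * ((t : ℕ) : ℂ) / n) *
        (starRingEnd ℂ) (Complex.exp (-2 * (Real.pi : ℂ) * Complex.I * ((i : ℕ) : ℂ) * ((s : ℕ) : ℂ) / n))
        = ζ ^ (i : ℕ) := by
    intro i
    rw [← Complex.exp_conj, hζ, ← Complex.exp_nat_mul, ← Complex.exp_add]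
    congr 1
    have hconj : (starRingEnd ℂ) (-2 * (Real.pi : ℂ) * Complex.I * ((i : ℕ) : ℂ) * ((s : ℕ) : ℂ) / n)
        = 2 * (Real.pi : ℂ) * Complex.I * ((i : ℕ) : ℂ) * ((s : ℕ) : ℂ) / n := by
      simp only [map_div₀, _root_.map_mul, map_neg, map_ofNat, Complex.conj_I,
        Complex.conj_ofReal, Complex.conj_natCast]
      ring
    rw [hconj]
    field_simp
    ring
  rw [Finset.sum_congr rfl fun i _ => key i]
  by_cases hts : t = s
  · subst hts
    simp [hζ, Finset.card_univ]
  · rw [if_neg hts]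
    have hζn : ζ ^ n = 1 := by
      rw [hζ, ← Complex.exp_nat_mul]
      have : (n : ℂ) * (2 * (Real.pi : ℂ) * Complex.I * (((s : ℕ) : ℂ) - ((t : ℕ) : ℂ)) / n)
          = (((((s : ℕ) : ℤ) - ((t : ℕ) : ℤ)) : ℤ) : ℂ) * (2 * (Real.pi : ℂ) * Complex.I) := by
        push_cast
        field_simp
      rw [this, Complex.exp_int_mul_two_pi_mul_I]
    have hζ1 : ζ ≠ 1 := by
      intro h
      rw [hζ, Complex.exp_eq_one_iff] at h
      obtain ⟨m, hm⟩ := h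
      have hπ : (Real.pi : ℂ) ≠ 0 := by
        exact_mod_cast Complex.ofReal_ne_zero.2 Real.pi_ne_zero
      have hI : Complex.I ≠ 0 := Complex.I_ne_zero
      have hC : (((s : ℕ) : ℂ) - ((t : ℕ) : ℂ)) = (m : ℂ) * n := by
        field_simp at hm
        have h2 : (2 : ℂ) ≠ 0 := two_ne_zero
        linear_combination hm
      have hZ : ((s : ℕ) : ℤ) - ((t : ℕ) : ℤ) = m * n := by exact_mod_cast hC
      have hs := s.isLt
      have ht := t.isLt
      have hne : ((s : ℕ) : ℤ) ≠ ((t : ℕ) : ℤ) := by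
        simp only [ne_eq, Nat.cast_inj]
        exact fun h' => hts (Fin.ext h'.symm)
      rcases lt_trichotomy m 0 with hm' | hm' | hm'
      · have : m ≤ -1 := by omega
        nlinarith [hZ, (show ((s:ℕ):ℤ) ≥ 0 by positivity), (show ((t:ℕ):ℤ) < n by exact_mod_cast ht)]
      · subst hm'; simp at hZ; omega
      · have : 1 ≤ m := hm'
        nlinarith [hZ, (show ((t:ℕ):ℤ) ≥ 0 by positivity), (show ((s:ℕ):ℤ) < n by exact_mod_cast hs)]
    have := geom_sum_eq hζ1 n
    rw [Fin.sum_univ_eq_sum_range (fun i => ζ ^ i), this, hζn, sub_self, zero_div]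

lemma tube_parseval {n : ℕ} (d : Fin n → ℝ) :
    ∑ i : Fin n, Complex.normSq (∑ t, ((d t : ℝ) : ℂ) *
        Complex.exp (-2 * (Real.pi : ℂ) * Complex.I * ((i : ℕ) : ℂ) * ((t : ℕ) : ℂ) / n)) =
      n * ∑ t, d t ^ 2 := by
  apply Complex.ofReal_injective
  push_cast
  calc ∑ i : Fin n, (Complex.normSq (∑ t, ((d t : ℝ) : ℂ) *
        Complex.exp (-2 * (Real.pi : ℂ) * Complex.I * ((i : ℕ) : ℂ) * ((t : ℕ) : ℂ) / n)) : ℂ)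
      = ∑ i : Fin n, (∑ t, ((d t : ℝ) : ℂ) *
          Complex.exp (-2 * (Real.pi : ℂ) * Complex.I * ((i : ℕ) : ℂ) * ((t : ℕ) : ℂ) / n)) *
        (starRingEnd ℂ) (∑ s, ((d s : ℝ) : ℂ) *
          Complex.exp (-2 * (Real.pi : ℂ) * Complex.I * ((i : ℕ) : ℂ) * ((s : ℕ) : ℂ) / n)) := by
        refine Finset.sum_congr rfl fun i _ => ?_
        rw [Complex.normSq_eq_conj_mul_self]
        ring
    _ = ∑ t, ∑ s, (((d t : ℝ) : ℂ) * ((d s : ℝ) : ℂ)) *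
          ∑ i : Fin n, Complex.exp (-2 * (Real.pi : ℂ) * Complex.I * ((i : ℕ) : ℂ) * ((t : ℕ) : ℂ) / n) *
            (starRingEnd ℂ) (Complex.exp (-2 * (Real.pi : ℂ) * Complex.I * ((i : ℕ) : ℂ) * ((s : ℕ) : ℂ) / n)) := by
        simp_rw [map_sum, _root_.map_mul, Complex.conj_ofReal, Finset.sum_mul_sum, Finset.mul_sum]
        rw [Finset.sum_comm]
        refine Finset.sum_congr rfl fun t _ => ?_
        rw [Finset.sum_comm]
        refine Finset.sum_congr rfl fun s _ => Finset.sum_congr rfl fun i _ => ?_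
        ring
    _ = ∑ t, (((d t : ℝ) : ℂ) * ((d t : ℝ) : ℂ)) * n := by
        refine Finset.sum_congr rfl fun t _ => ?_
        rw [Finset.sum_congr rfl fun s _ => by rw [sum_root t s]]
        simp
    _ = (n : ℂ) * ∑ t, ((d t : ℝ) : ℂ) ^ 2 := by
        rw [Finset.mul_sum]
        refine Finset.sum_congr rfl fun t _ => by ring

lemma sum_frob_fourier {n₁ n₂ n₃ : ℕ} (D : Fin n₁ → Fin n₂ → Fin n₃ → ℝ) :
    ∑ i, frob (fourierSlice D i) = n₃ * tFrobSq D := by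
  unfold frob fourierSlice tFrobSq
  simp only [Matrix.of_apply]
  rw [Finset.sum_comm, Finset.mul_sum]
  refine Finset.sum_congr rfl fun a _ => ?_
  rw [Finset.sum_comm, Finset.mul_sum]
  refine Finset.sum_congr rfl fun b _ => ?_
  exact tube_parseval (fun t => D a b t)

lemma fourierSlice_sub {n₁ n₂ n₃ : ℕ} (A C : Fin n₁ → Fin n₂ → Fin n₃ → ℝ) (i : Fin n₃) :
    fourierSlice (fun a b t => A a b t - C a b t) i = fourierSlice A i - fourierSlice C i := by
  ext a b
  simp only [fourierSlice, Matrix.of_apply, Matrix.sub_apply, Complex.ofReal_sub]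
  rw [← Finset.sum_sub_distrib]
  refine Finset.sum_congr rfl fun t _ => by ring

lemma card_filter_lt {n r : ℕ} (hr : r ≤ n) :
    (Finset.univ.filter fun j : Fin n => (j : ℕ) < r).card = r := by
  have : (Finset.univ.filter fun j : Fin n => (j : ℕ) < r)
      = Finset.map (Fin.castLEEmb hr) Finset.univ := by
    ext j
    simp only [Finset.mem_filter, Finset.mem_univ, true_and, Finset.mem_map, Fin.castLEEmb,
      Function.Embedding.coeFn_mk]
    constructor
    · intro hj
      exact ⟨⟨(j : ℕ), hj⟩, by simp [Fin.castLE]⟩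
    · rintro ⟨i, rfl⟩
      simpa using i.isLt
  rw [this, Finset.card_map, Finset.card_univ, Fintype.card_fin]

lemma weight_bound {n r : ℕ} (hr : r ≤ n) (μ c : Fin n → ℝ) (hmono : Monotone μ)
    (hμ : ∀ j, 0 ≤ μ j) (hc0 : ∀ j, 0 ≤ c j) (hc1 : ∀ j, c j ≤ 1)
    (hsum : (r : ℝ) ≤ ∑ j, c j) :
    ∑ j ∈ Finset.univ.filter (fun j : Fin n => (j : ℕ) < r), μ j ≤ ∑ j, μ j * c j := by
  rcases lt_or_eq_of_le hr with hlt | rfl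
  · set F := Finset.univ.filter (fun j : Fin n => (j : ℕ) < r) with hF
    set θ := μ ⟨r, hlt⟩ with hθ
    have hθ0 : 0 ≤ θ := hμ _
    have h1 : ∀ j ∈ F, μ j - θ ≤ (μ j - θ) * c j := by
      intro j hj
      rw [hF, Finset.mem_filter] at hj
      have hμθ : μ j ≤ θ := hmono (show j ≤ ⟨r, hlt⟩ by
        rw [Fin.le_def]; exact le_of_lt hj.2)
      nlinarith [hc1 j, hc0 j]
    have h2 : ∀ j ∈ Finset.univ, j ∉ F → 0 ≤ (μ j - θ) * c j := by
      intro j _ hj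
      rw [hF, Finset.mem_filter] at hj
      have : r ≤ (j : ℕ) := by
        by_contra h; exact hj ⟨Finset.mem_univ j, by omega⟩
      have hθμ : θ ≤ μ j := hmono (show (⟨r, hlt⟩ : Fin n) ≤ j by rw [Fin.le_def]; exact this)
      have := hc0 j
      nlinarith
    have hcard : (F.card : ℝ) = r := by rw [hF, card_filter_lt (le_of_lt hlt)]
    have step1 : ∑ j ∈ F, μ j = ∑ j ∈ F, (μ j - θ) + θ * r := by
      rw [Finset.sum_sub_distrib, Finset.sum_const, nsmul_eq_mul, hcard]; ring
    have step2 : ∑ j ∈ F, (μ j - θ) ≤ ∑ j ∈ F, (μ j - θ) * c j := Finset.sum_le_sum h1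
    have step3 : ∑ j ∈ F, (μ j - θ) * c j ≤ ∑ j, (μ j - θ) * c j :=
      Finset.sum_le_sum_of_subset_of_nonneg (Finset.filter_subset _ _) (fun j hj hj' => h2 j hj hj')
    have step4 : ∑ j, (μ j - θ) * c j = ∑ j, μ j * c j - θ * ∑ j, c j := by
      rw [Finset.mul_sum, ← Finset.sum_sub_distrib]
      exact Finset.sum_congr rfl fun j _ => by ring
    have step5 : θ * (r : ℝ) ≤ θ * ∑ j, c j := mul_le_mul_of_nonneg_left hsum hθ0
    linarith
  · have hc : ∀ j, c j = 1 := by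
      have hle : ∑ j, c j ≤ (r : ℝ) := by
        calc ∑ j, c j ≤ ∑ _j : Fin r, (1 : ℝ) := Finset.sum_le_sum fun j _ => hc1 j
          _ = r := by simp
      have hzero : ∑ j, (1 - c j) = 0 := by
        rw [Finset.sum_sub_distrib]
        simp only [Finset.sum_const, Finset.card_univ, Fintype.card_fin, nsmul_eq_mul, mul_one]
        linarith
      intro j
      have := (Finset.sum_eq_zero_iff_of_nonneg (fun j _ => by linarith [hc1 j])).1 hzero j
        (Finset.mem_univ j)
      linarith
    have hFu : (Finset.univ.filter fun j : Fin r => (j : ℕ) < r) = Finset.univ := by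
      ext j; simp [j.isLt]
    rw [hFu]
    exact le_of_eq (Finset.sum_congr rfl fun j _ => by rw [hc j, mul_one])

lemma normSq_eq_norm_sq (z : ℂ) : Complex.normSq z = ‖z‖ ^ 2 := by
  rw [Complex.sq_norm]

lemma frob_ge_sum_mulVec {a b d : ℕ} (E : Matrix (Fin a) (Fin b) ℂ)
    (w : Fin d → EuclideanSpace ℂ (Fin b)) (hw : Orthonormal ℂ w) :
    ∑ l, ∑ x, Complex.normSq ((E *ᵥ ⇑(w l)) x) ≤ frob E := by
  rw [Finset.sum_comm]
  unfold frob
  refine Finset.sum_le_sum fun x _ => ?_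
  set u : EuclideanSpace ℂ (Fin b) := WithLp.toLp 2 (fun y => (starRingEnd ℂ) (E x y)) with hu
  have h1 : ∀ l, (E *ᵥ ⇑(w l)) x = (inner ℂ u (w l) : ℂ) := by
    intro l
    rw [PiLp.inner_apply]
    simp only [RCLike.inner_apply, Matrix.mulVec, dotProduct, hu]
    refine Finset.sum_congr rfl fun y _ => ?_
    simp
    ring
  calc ∑ l, Complex.normSq ((E *ᵥ ⇑(w l)) x)
      = ∑ l, ‖(inner ℂ (w l) u : ℂ)‖ ^ 2 := by
        refine Finset.sum_congr rfl fun l _ => ?_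
        rw [h1 l, normSq_eq_norm_sq, norm_inner_symm]
    _ ≤ ‖u‖ ^ 2 := hw.sum_inner_products_le u
    _ = ∑ y, Complex.normSq (E x y) := by
        rw [EuclideanSpace.norm_eq, Real.sq_sqrt (by positivity)]
        refine Finset.sum_congr rfl fun y _ => ?_
        rw [← normSq_eq_norm_sq]
        simp [hu, Complex.normSq_conj]

lemma mulVec_normSq_eq {a b : ℕ} (M : Matrix (Fin a) (Fin b) ℂ) (w : EuclideanSpace ℂ (Fin b)) :
    ∑ x, Complex.normSq ((M *ᵥ ⇑w) x) =
      ∑ j, (Matrix.isHermitian_conjTranspose_mul_self M).eigenvalues j *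
        ‖(inner ℂ ((Matrix.isHermitian_conjTranspose_mul_self M).eigenvectorBasis j) w : ℂ)‖ ^ 2 := by
  set hH := Matrix.isHermitian_conjTranspose_mul_self M with hHdef
  set U : Matrix (Fin b) (Fin b) ℂ := (hH.eigenvectorUnitary : Matrix (Fin b) (Fin b) ℂ) with hU
  set v : Fin b → ℂ := star U *ᵥ ⇑w with hv
  have hvj : ∀ j, v j = (inner ℂ (hH.eigenvectorBasis j) w : ℂ) := by
    intro j
    rw [PiLp.inner_apply]
    simp only [hv, Matrix.mulVec, dotProduct, Matrix.star_apply, RCLike.inner_apply]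
    refine Finset.sum_congr rfl fun i _ => ?_
    rw [mul_comm]
    congr 1
  have hstarv : star v = star ⇑w ᵥ* U := by
    rw [hv, Matrix.star_mulVec, Matrix.star_eq_conjTranspose, Matrix.conjTranspose_conjTranspose]
  apply Complex.ofReal_injective
  push_cast
  have step1 : ∑ x, (Complex.normSq ((M *ᵥ ⇑w) x) : ℂ) = star (M *ᵥ ⇑w) ⬝ᵥ (M *ᵥ ⇑w) := by
    simp only [dotProduct, Pi.star_apply]
    exact Finset.sum_congr rfl fun x _ => Complex.normSq_eq_conj_mul_self
  have step2 : star (M *ᵥ ⇑w) ⬝ᵥ (M *ᵥ ⇑w) = star ⇑w ⬝ᵥ ((Mᴴ * M) *ᵥ ⇑w) := by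
    rw [Matrix.star_mulVec, dotProduct_mulVec, Matrix.vecMul_vecMul,
      dotProduct_mulVec (star ⇑w) (Mᴴ * M)]
  have step3 : star ⇑w ⬝ᵥ ((Mᴴ * M) *ᵥ ⇑w)
      = star v ⬝ᵥ ((Matrix.diagonal (RCLike.ofReal ∘ hH.eigenvalues)) *ᵥ v) := by
    conv_lhs => rw [hH.spectral_theorem, Unitary.conjStarAlgAut_apply]
    rw [← hU, ← Matrix.mulVec_mulVec, ← Matrix.mulVec_mulVec, dotProduct_mulVec,
      ← hstarv]
  have step4 : star v ⬝ᵥ ((Matrix.diagonal (RCLike.ofReal ∘ hH.eigenvalues)) *ᵥ v)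
      = ∑ j, ((hH.eigenvalues j : ℝ) : ℂ) * ((‖v j‖ : ℝ) : ℂ) ^ 2 := by
    simp only [dotProduct, Matrix.mulVec_diagonal, Pi.star_apply, Function.comp_apply]
    refine Finset.sum_congr rfl fun j _ => ?_
    have h1 : star (v j) * v j = ((Complex.normSq (v j) : ℝ) : ℂ) :=
      Complex.normSq_eq_conj_mul_self.symm
    calc star (v j) * (((hH.eigenvalues j : ℝ) : ℂ) * v j)
        = ((hH.eigenvalues j : ℝ) : ℂ) * (star (v j) * v j) := by ring
      _ = _ := by rw [h1, normSq_eq_norm_sq]; push_cast; ring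
  rw [step1, step2, step3, step4]
  refine Finset.sum_congr rfl fun j _ => ?_
  rw [hvj j]

lemma slice_bound {n₁ n₂ kk : ℕ} (hk : 1 ≤ kk) (M : Matrix (Fin n₁) (Fin n₂) ℂ)
    (Xc : Matrix (Fin n₁) (Fin kk) ℂ) (Yc : Matrix (Fin kk) (Fin n₂) ℂ) :
    ∑ j ∈ Finset.Icc (kk + 1) (min n₁ n₂), sval M j ^ 2 ≤ frob (M - Xc * Yc) := by
  classical
  rcases Nat.eq_zero_or_pos n₂ with h2 | h2
  · subst h2
    rw [Nat.min_zero, Finset.Icc_eq_empty (by omega), Finset.sum_empty]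
    exact frob_nonneg _
  -- kernel subspace of the rank-≤kk map
  set L : EuclideanSpace ℂ (Fin n₂) →ₗ[ℂ] EuclideanSpace ℂ (Fin n₁) :=
    Matrix.toEuclideanLin (Xc * Yc) with hL
  have hcomp : L = (Matrix.toEuclideanLin Xc).comp (Matrix.toEuclideanLin Yc) := by
    apply LinearMap.ext
    intro v
    simp only [hL, LinearMap.comp_apply, Matrix.toEuclideanLin_apply]
    simp [Matrix.mulVec_mulVec]
  have hrange : Module.finrank ℂ ↥(LinearMap.range L) ≤ kk := by
    have h1 : LinearMap.range L ≤ LinearMap.range (Matrix.toEuclideanLin Xc) := by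
      rw [hcomp]; exact LinearMap.range_comp_le_range _ _
    calc Module.finrank ℂ ↥(LinearMap.range L)
        ≤ Module.finrank ℂ ↥(LinearMap.range (Matrix.toEuclideanLin Xc)) :=
          Submodule.finrank_mono h1
      _ ≤ Module.finrank ℂ (EuclideanSpace ℂ (Fin kk)) :=
          LinearMap.finrank_range_le (Matrix.toEuclideanLin Xc)
      _ = kk := finrank_euclideanSpace_fin
  have hker : n₂ - kk ≤ Module.finrank ℂ ↥(LinearMap.ker L) := by
    have h := LinearMap.finrank_range_add_finrank_ker L
    rw [finrank_euclideanSpace_fin] at h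
    omega
  set d := Module.finrank ℂ ↥(LinearMap.ker L) with hd
  set wb := stdOrthonormalBasis ℂ ↥(LinearMap.ker L) with hwb
  set W : Fin d → EuclideanSpace ℂ (Fin n₂) :=
    fun l => ((wb l : ↥(LinearMap.ker L)) : EuclideanSpace ℂ (Fin n₂)) with hWdef
  have hWo : Orthonormal ℂ W := wb.orthonormal.comp_linearIsometry (LinearMap.ker L).subtypeₗᵢ
  have hWker : ∀ l, (Xc * Yc) *ᵥ ⇑(W l) = 0 := by
    intro l
    have hmem : W l ∈ LinearMap.ker L := (wb l).2
    rw [LinearMap.mem_ker, hL, Matrix.toEuclideanLin_apply] at hmem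
    have := congrArg (⇑(WithLp.equiv 2 (Fin n₁ → ℂ))) hmem
    simpa using this
  set lam := (Matrix.isHermitian_conjTranspose_mul_self M).eigenvalues with hlam
  set u := (Matrix.isHermitian_conjTranspose_mul_self M).eigenvectorBasis with hu
  have hlam0 : ∀ j, 0 ≤ lam j := Matrix.eigenvalues_conjTranspose_mul_self_nonneg M
  set c : Fin n₂ → ℝ := fun j => ∑ l, ‖(inner ℂ (u j) (W l) : ℂ)‖ ^ 2 with hc
  have hc0 : ∀ j, 0 ≤ c j := fun j => Finset.sum_nonneg fun l _ => by positivity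
  have hc1 : ∀ j, c j ≤ 1 := by
    intro j
    calc c j = ∑ l, ‖(inner ℂ (W l) (u j) : ℂ)‖ ^ 2 :=
          Finset.sum_congr rfl fun l _ => by rw [norm_inner_symm]
      _ ≤ ‖u j‖ ^ 2 := hWo.sum_inner_products_le (u j)
      _ = 1 := by rw [u.orthonormal.1 j]; norm_num
  have hcsum : ∑ j, c j = (d : ℝ) := by
    simp only [hc]
    rw [Finset.sum_comm]
    have hper : ∀ l, ∑ j, ‖(inner ℂ (u j) (W l) : ℂ)‖ ^ 2 = 1 := by
      intro l
      apply Complex.ofReal_injective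
      push_cast
      have hterm : ∀ j, (((‖(inner ℂ (u j) (W l) : ℂ)‖ : ℝ) : ℂ)) ^ 2
          = (inner ℂ (W l) (u j) : ℂ) * (inner ℂ (u j) (W l) : ℂ) := by
        intro j
        have hzz : (inner ℂ (W l) (u j) : ℂ) = (starRingEnd ℂ) (inner ℂ (u j) (W l) : ℂ) :=
          (inner_conj_symm (W l) (u j)).symm
        rw [hzz, ← Complex.normSq_eq_conj_mul_self, normSq_eq_norm_sq]
        push_cast
        ring
      calc ∑ j, (((‖(inner ℂ (u j) (W l) : ℂ)‖ : ℝ) : ℂ)) ^ 2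
          = ∑ j, (inner ℂ (W l) (u j) : ℂ) * (inner ℂ (u j) (W l) : ℂ) :=
            Finset.sum_congr rfl fun j _ => hterm j
        _ = (inner ℂ (W l) (W l) : ℂ) := u.sum_inner_mul_inner (W l) (W l)
        _ = ((1 : ℝ) : ℂ) := by
            rw [inner_self_eq_norm_sq_to_K, hWo.1 l]
            norm_num
    rw [Finset.sum_congr rfl fun l _ => hper l]
    simp
  have hmain : ∑ j, lam j * c j ≤ frob (M - Xc * Yc) := by
    have h1 := frob_ge_sum_mulVec (M - Xc * Yc) W hWo
    have h2 : ∀ l, (M - Xc * Yc) *ᵥ ⇑(W l) = M *ᵥ ⇑(W l) := by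
      intro l; rw [Matrix.sub_mulVec, hWker l, sub_zero]
    calc ∑ j, lam j * c j
        = ∑ l, ∑ j, lam j * ‖(inner ℂ (u j) (W l) : ℂ)‖ ^ 2 := by
          simp only [hc, Finset.mul_sum]
          rw [Finset.sum_comm]
      _ = ∑ l, ∑ x, Complex.normSq ((M *ᵥ ⇑(W l)) x) :=
          Finset.sum_congr rfl fun l _ => (mulVec_normSq_eq M (W l)).symm
      _ = ∑ l, ∑ x, Complex.normSq (((M - Xc * Yc) *ᵥ ⇑(W l)) x) := by
          refine Finset.sum_congr rfl fun l _ => ?_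
          rw [h2 l]
      _ ≤ frob (M - Xc * Yc) := h1
  set σ := Tuple.sort lam with hσ
  have hmono : Monotone (lam ∘ σ) := Tuple.monotone_sort lam
  have hperm : ∑ j, lam j * c j = ∑ j, (lam ∘ σ) j * (c ∘ σ) j :=
    (Equiv.sum_comp σ (fun j => lam j * c j)).symm
  have hsum' : ((n₂ - kk : ℕ) : ℝ) ≤ ∑ j, (c ∘ σ) j := by
    simp only [Function.comp_apply]
    rw [Equiv.sum_comp σ c, hcsum]
    exact_mod_cast hker
  have hwb2 := weight_bound (Nat.sub_le n₂ kk) (lam ∘ σ) (c ∘ σ) hmono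
    (fun j => hlam0 (σ j)) (fun j => hc0 (σ j)) (fun j => hc1 (σ j)) hsum'
  have hfinal : ∑ j ∈ Finset.univ.filter (fun j : Fin n₂ => (j : ℕ) < n₂ - kk), (lam ∘ σ) j
      ≤ frob (M - Xc * Yc) := le_trans hwb2 (le_trans (le_of_eq hperm.symm) hmain)
  set f : ℕ → Fin n₂ := fun j => (⟨min (n₂ - j) (n₂ - 1), by omega⟩ : Fin n₂) with hf
  have hsv : ∀ j ∈ Finset.Icc (kk + 1) (min n₁ n₂), sval M j ^ 2 = (lam ∘ σ) (f j) := by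
    intro j hj
    rw [Finset.mem_Icc] at hj
    have hmin := min_le_right n₁ n₂
    have hj1 : j - 1 < n₂ := by omega
    rw [sval, dif_pos hj1, Function.comp_apply, Real.sq_sqrt]
    · have hidx : Fin.rev (⟨j - 1, hj1⟩ : Fin n₂) = f j := by
        apply Fin.ext
        simp only [hf, Fin.val_rev]
        omega
      rw [hidx]
      rfl
    · exact hlam0 _
  calc ∑ j ∈ Finset.Icc (kk + 1) (min n₁ n₂), sval M j ^ 2
      = ∑ j ∈ Finset.Icc (kk + 1) (min n₁ n₂), (lam ∘ σ) (f j) := Finset.sum_congr rfl hsv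
    _ = ∑ m ∈ (Finset.Icc (kk + 1) (min n₁ n₂)).image f, (lam ∘ σ) m := by
        rw [Finset.sum_image]
        intro x hx y hy hxy
        rw [Finset.mem_coe, Finset.mem_Icc] at hx hy
        have hmin := min_le_right n₁ n₂
        have := congrArg Fin.val hxy
        simp only [hf] at this
        omega
    _ ≤ ∑ m ∈ Finset.univ.filter (fun m : Fin n₂ => (m : ℕ) < n₂ - kk), (lam ∘ σ) m := by
        apply Finset.sum_le_sum_of_subset_of_nonneg
        · intro m hm
          rw [Finset.mem_image] at hm
          obtain ⟨j, hj, rfl⟩ := hm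
          rw [Finset.mem_Icc] at hj
          have hmin := min_le_right n₁ n₂
          simp only [Finset.mem_filter, Finset.mem_univ, true_and, hf]
          omega
        · intro m _ _
          exact hlam0 (σ m)
    _ ≤ frob (M - Xc * Yc) := hfinal

end TsvdAux

/-- **Optimality (lower bound) half of the truncated t-SVD theorem**: every t-product
`C = X ∗ Y` of tubal rank `k` (characterized slice-wise in the Fourier domain by
`Ĉ^{(i)} = X̂^{(i)} Ŷ^{(i)}`) satisfies
`‖A - C‖_F² ≥ (1/n₃) ∑_{i=1}^{n₃} ∑_{j>k} (σ̂_j^{(i)})²`. -/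
theorem truncated_tsvd_lower_bound {n₁ n₂ n₃ k : ℕ} (hk : 1 ≤ k)
    (A : Fin n₁ → Fin n₂ → Fin n₃ → ℝ)
    (X : Fin n₁ → Fin k → Fin n₃ → ℝ) (Y : Fin k → Fin n₂ → Fin n₃ → ℝ)
    (C : Fin n₁ → Fin n₂ → Fin n₃ → ℝ)
    (hC : ∀ i : Fin n₃, fourierSlice C i = fourierSlice X i * fourierSlice Y i) :
    tFrobSq (fun a b t => A a b t - C a b t) ≥
      (1 / (n₃ : ℝ)) * ∑ i : Fin n₃,
        ∑ j ∈ Finset.Icc (k + 1) (min n₁ n₂), sval (fourierSlice A i) j ^ 2 := by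
  rcases Nat.eq_zero_or_pos n₃ with h3 | h3
  · subst h3
    rw [Finset.univ_eq_empty, Finset.sum_empty, mul_zero]
    exact TsvdAux.tFrobSq_nonneg _
  have key : ∀ i : Fin n₃,
      ∑ j ∈ Finset.Icc (k + 1) (min n₁ n₂), sval (fourierSlice A i) j ^ 2 ≤
        TsvdAux.frob (fourierSlice (fun a b t => A a b t - C a b t) i) := by
    intro i
    rw [TsvdAux.fourierSlice_sub A C i, hC i]
    exact TsvdAux.slice_bound hk (fourierSlice A i) (fourierSlice X i) (fourierSlice Y i)
  have hsum : ∑ i : Fin n₃, ∑ j ∈ Finset.Icc (k + 1) (min n₁ n₂), sval (fourierSlice A i) j ^ 2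
      ≤ n₃ * tFrobSq (fun a b t => A a b t - C a b t) := by
    rw [← TsvdAux.sum_frob_fourier (fun a b t => A a b t - C a b t)]
    exact Finset.sum_le_sum fun i _ => key i
  rw [ge_iff_le, div_mul_eq_mul_div, one_mul, div_le_iff₀ (by positivity)]
  calc ∑ i : Fin n₃, ∑ j ∈ Finset.Icc (k + 1) (min n₁ n₂), sval (fourierSlice A i) j ^ 2
      ≤ (n₃ : ℝ) * tFrobSq (fun a b t => A a b t - C a b t) := hsum
    _ = tFrobSq (fun a b t => A a b t - C a b t) * n₃ := by ring

end
end

section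
/- For all integers n, k, p with n > k ≥ 1 and p ≥ 2, ((sqrt(n−k) + sqrt(k+p) + 7)² / (n−k)) · (16 e² (k+p) / (p+1)²) · (p−1) > 1. Consequently, for ℓ = k + p and p ≥ 2, the expected Frobenius error bound sqrt(Σ_{j>k} σ_j² + (k τ_k^{4q}(n−k)/(p−1)) σ_{k+1}²) for randomized subspace iteration is sharper than the bound sqrt(Σ_{j>k} σ_j² + k τ_k^{4q}(n−k) C² σ_{k+1}²) with C = (sqrt(n−k) + sqrt(k+p) + 7)·(4 e sqrt(k+p)/(p+1)). -/
open Real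

/-! The factor `16 e² (k+p)(p-1)/(p+1)²` already exceeds `1` because `e² > 4` and
`(p+1)² ≤ 9/2 · p(p-1)` for `p ≥ 2`, while `(√(n-k) + √(k+p) + 7)²/(n-k) ≥ 1` since its numerator
is at least `(√(n-k))²`. As `C² = (√(n-k) + √(k+p) + 7)² · 16 e² (k+p)/(p+1)²`, the same inequality
reads `C² (p-1) > n - k ≥ 1`, so `C² > 1/(p-1)`. -/

lemma one_lt_sixteen_mul_exp_one_sq_mul_div_sq_mul {m p : ℝ} (hp : 2 ≤ p) (hm : p ≤ m) :
    1 < 16 * exp 1 ^ 2 * m / (p + 1) ^ 2 * (p - 1) := by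
  have he : 2 < exp 1 := lt_trans (by norm_num) exp_one_gt_d9
  have hpp : 2 * (p + 1) ^ 2 ≤ 9 * (p * (p - 1)) := by nlinarith
  rw [div_mul_eq_mul_div, one_lt_div (by positivity)]
  calc (p + 1) ^ 2 ≤ 9 / 2 * (p * (p - 1)) := by linarith
    _ < 16 * exp 1 ^ 2 * (p * (p - 1)) := by
        gcongr
        · exact mul_pos (by linarith) (by linarith)
        · nlinarith
    _ ≤ 16 * exp 1 ^ 2 * m * (p - 1) := by
        rw [← mul_assoc _ p]
        gcongr
        linarith

lemma one_le_sqrt_add_sq_div {N c : ℝ} (hN : 0 < N) (hc : 0 ≤ c) : 1 ≤ (√N + c) ^ 2 / N := by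
  rw [one_le_div hN]
  calc N = √N ^ 2 := (sq_sqrt hN.le).symm
    _ ≤ (√N + c) ^ 2 := by gcongr; linarith

lemma inv_lt_mul_of_one_lt_div_mul_mul {S N G r : ℝ} (hN : 1 ≤ N) (hr : 0 < r)
    (h : 1 < S / N * G * r) : r⁻¹ < S * G := by
  rw [div_mul_eq_mul_div, div_mul_eq_mul_div, one_lt_div (by linarith)] at h
  rw [inv_lt_iff_one_lt_mul₀' hr]
  linarith

theorem sharper_than_gu_general (n k p : ℕ) (hkn : k < n) (hp : 2 ≤ p) :
    1 < ((Real.sqrt ((n : ℝ) - k) + Real.sqrt ((k : ℝ) + p) + 7) ^ 2 / ((n : ℝ) - k)) *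
        (16 * Real.exp 1 ^ 2 * ((k : ℝ) + p) / ((p : ℝ) + 1) ^ 2) * ((p : ℝ) - 1) ∧
      ∀ (s σ τ : ℝ) (q : ℕ), 0 ≤ s → 0 ≤ σ → 0 ≤ τ →
        Real.sqrt (s + ((k : ℝ) * τ ^ (4 * q) * ((n : ℝ) - k) / ((p : ℝ) - 1)) * σ ^ 2) ≤
          Real.sqrt (s + (k : ℝ) * τ ^ (4 * q) * ((n : ℝ) - k) *
            ((Real.sqrt ((n : ℝ) - k) + Real.sqrt ((k : ℝ) + p) + 7) *
              (4 * Real.exp 1 * Real.sqrt ((k : ℝ) + p) / ((p : ℝ) + 1))) ^ 2 * σ ^ 2) := by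
  have hN : (1 : ℝ) ≤ n - k := by
    have : (k : ℝ) + 1 ≤ n := by exact_mod_cast hkn
    linarith
  have hp' : (2 : ℝ) ≤ p := by exact_mod_cast hp
  have hcoeff : 1 < (√((n : ℝ) - k) + √((k : ℝ) + p) + 7) ^ 2 / ((n : ℝ) - k) *
      (16 * exp 1 ^ 2 * ((k : ℝ) + p) / ((p : ℝ) + 1) ^ 2) * ((p : ℝ) - 1) := by
    rw [mul_assoc, add_assoc]
    refine one_lt_mul_of_le_of_lt (one_le_sqrt_add_sq_div (by linarith) (by positivity)) ?_
    exact one_lt_sixteen_mul_exp_one_sq_mul_div_sq_mul hp' (by simp)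
  refine ⟨hcoeff, fun s σ τ q _ _ _ => sqrt_le_sqrt ?_⟩
  have hC : ((√((n : ℝ) - k) + √((k : ℝ) + p) + 7) *
      (4 * exp 1 * √((k : ℝ) + p) / ((p : ℝ) + 1))) ^ 2 =
      (√((n : ℝ) - k) + √((k : ℝ) + p) + 7) ^ 2 *
        (16 * exp 1 ^ 2 * ((k : ℝ) + p) / ((p : ℝ) + 1) ^ 2) := by
    rw [mul_pow, div_pow, mul_pow, mul_pow, sq_sqrt (by positivity)]
    norm_num
  rw [hC, div_eq_mul_inv]
  have hN₀ : 0 ≤ (n : ℝ) - k := by linarith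
  gcongr
  exact (inv_lt_mul_of_one_lt_div_mul_mul hN (by linarith) hcoeff).le

/-- **Comparison with Gu's bound** (Remark A.2).  For all integers `n > k ≥ 1` and `p ≥ 2`,
`((√(n-k) + √(k+p) + 7)²/(n-k)) · (16 e² (k+p)/(p+1)²) · (p-1) > 1`.  Consequently, for
`ℓ = k+p` and `p ≥ 2`, the expected Frobenius error bound
`√(∑_{j>k} σ_j² + (k τ_k^{4q} (n-k)/(p-1)) σ_{k+1}²)` for randomized subspace iteration is
sharper than (i.e. at most) the bound `√(∑_{j>k} σ_j² + k τ_k^{4q} (n-k) C² σ_{k+1}²)` with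
`C = (√(n-k) + √(k+p) + 7)(4 e √(k+p)/(p+1))`. -/
theorem sharper_than_gu (n k p : ℕ) (hkn : k < n) (hk : 1 ≤ k) (hp : 2 ≤ p) :
    1 < ((Real.sqrt ((n : ℝ) - k) + Real.sqrt ((k : ℝ) + p) + 7) ^ 2 / ((n : ℝ) - k)) *
        (16 * Real.exp 1 ^ 2 * ((k : ℝ) + p) / ((p : ℝ) + 1) ^ 2) * ((p : ℝ) - 1) ∧
      ∀ (s σ τ : ℝ) (q : ℕ), 0 ≤ s → 0 ≤ σ → 0 ≤ τ →
        Real.sqrt (s + ((k : ℝ) * τ ^ (4 * q) * ((n : ℝ) - k) / ((p : ℝ) - 1)) * σ ^ 2) ≤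
          Real.sqrt (s + (k : ℝ) * τ ^ (4 * q) * ((n : ℝ) - k) *
            ((Real.sqrt ((n : ℝ) - k) + Real.sqrt ((k : ℝ) + p) + 7) *
              (4 * Real.exp 1 * Real.sqrt ((k : ℝ) + p) / ((p : ℝ) + 1))) ^ 2 * σ ^ 2) :=
  sharper_than_gu_general n k p hkn hp
end
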